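/- Let ψ be a branching mechanism with ∫^∞ du/ψ(u) < ∞, let φ = ψ' ∘ ψ⁻¹, and for r, λ ≥ 0 let κ_r(λ, 0) be the solution of ∂κ_r/∂r = λ - ψ(κ_r) with κ₀ = 0, and set L_r(λ) = 1 - ψ(κ_r(λ,0))/λ. Then for all r, λ > 0: ∫₀^{-log L_r(λ)} dx / φ(λ(1 - e^{-x})) = r. -/

import Mathlib

/-!
Substitute `x = τ s := -log (1 - ψ (κ_s) / λ)` for `s ∈ [0, r]`. Along the flow
`κ' = λ - ψ (κ)` one has `τ' s = ψ' (κ_s)`, while the integrand at `τ s` is `1 / ψ' (κ_s)`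
because `λ (1 - e^{-τ s}) = ψ (κ_s)`; so the integral becomes `∫₀^r ds = r`.

This needs `κ_s ∈ [0, ψ⁻¹ λ)` with `κ_s > 0` for `s > 0`. The flow cannot cross `0`, where
`κ' = λ > 0`, and it cannot reach `c = ψ⁻¹ λ`: convexity of `ψ` gives
`λ - ψ (x) ≤ ψ' (c) (c - x)`, and Grönwall's inequality keeps `κ_s - c` negative.
Convexity of `ψ` comes from its Lévy–Khintchine form; with `ψ 0 = 0` and `ψ > 0` on `(0, ∞)`
it also makes `ψ` strictly increasing with `ψ' > 0` there.
-/

open MeasureTheory Real Set intervalIntegral Filter Topology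

lemma Real.exp_neg_sub_one_add_nonneg (x : ℝ) : 0 ≤ exp (-x) - 1 + x := by
  linarith [add_one_le_exp (-x)]

lemma Real.exp_neg_sub_one_add_le_sq {x : ℝ} (hx : 0 ≤ x) : exp (-x) - 1 + x ≤ x ^ 2 := by
  rcases le_total x 1 with hx1 | hx1
  · have := abs_exp_sub_one_sub_id_le (x := -x) (by rw [abs_neg, abs_of_nonneg hx]; exact hx1)
    rw [neg_sq] at this
    linarith [le_abs_self (exp (-x) - 1 - -x)]
  · nlinarith [exp_le_one_iff.2 (neg_nonpos.2 hx)]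

lemma Real.exp_neg_mul_sub_one_add_mul_le {a r : ℝ} (ha : 0 ≤ a) (hr : 0 ≤ r) :
    exp (-(a * r)) - 1 + a * r ≤ (a + a ^ 2) * min r (r ^ 2) := by
  have har : 0 ≤ a * r := mul_nonneg ha hr
  have hlin : exp (-(a * r)) - 1 + a * r ≤ a * r := by
    linarith [exp_le_one_iff.2 (neg_nonpos.2 har)]
  have hsq := exp_neg_sub_one_add_le_sq har
  rcases le_total r 1 with hr1 | hr1
  · rw [min_eq_right (by nlinarith)]
    nlinarith [mul_nonneg ha (sq_nonneg r)]
  · rw [min_eq_left (by nlinarith)]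
    nlinarith [mul_nonneg (sq_nonneg a) hr]

lemma Real.convexOn_exp_neg_mul_sub_one_add_mul (r : ℝ) :
    ConvexOn ℝ univ (fun a => exp (-(a * r)) - 1 + a * r) := by
  refine ⟨convex_univ, fun a _ b _ s t hs ht hst => ?_⟩
  have := convexOn_exp.2 (mem_univ (-(a * r))) (mem_univ (-(b * r))) hs ht hst
  simp only [smul_eq_mul] at this ⊢
  have e : -((s * a + t * b) * r) = s * -(a * r) + t * -(b * r) := by ring
  rw [e]
  nlinarith

theorem convexOn_integral {E X : Type*} [AddCommGroup E] [Module ℝ E] [MeasurableSpace X]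
    {μ : Measure X} {s : Set E} {F : E → X → ℝ} (hs : Convex ℝ s)
    (hF : ∀ x, ConvexOn ℝ s (F · x)) (hint : ∀ a ∈ s, Integrable (F a) μ) :
    ConvexOn ℝ s (fun a => ∫ x, F a x ∂μ) := by
  refine ⟨hs, fun a ha b hb p q hp hq hpq => ?_⟩
  calc ∫ x, F (p • a + q • b) x ∂μ
      ≤ ∫ x, (p • F a x + q • F b x) ∂μ :=
        integral_mono (hint _ (hs ha hb hp hq hpq))
          (((hint a ha).smul p).add ((hint b hb).smul q))
          fun x => (hF x).2 ha hb hp hq hpq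
    _ = p • ∫ x, F a x ∂μ + q • ∫ x, F b x ∂μ := by
        simp only [smul_eq_mul]
        rw [integral_add ((hint a ha).const_mul p) ((hint b hb).const_mul q),
          MeasureTheory.integral_const_mul, MeasureTheory.integral_const_mul]

noncomputable def branchingMechanism (α β : ℝ) (ν : Measure ℝ) (l : ℝ) : ℝ :=
  α * l + β * l ^ 2 + ∫ r, (exp (-(l * r)) - 1 + l * r) ∂ν

namespace branchingMechanism

variable {α β : ℝ} {ν : Measure ℝ}

lemma integrable_integrand (hν0 : ν (Iic 0) = 0)
    (hνint : Integrable (fun r => min r (r ^ 2)) ν) {l : ℝ} (hl : 0 ≤ l) :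
    Integrable (fun r => exp (-(l * r)) - 1 + l * r) ν := by
  refine (hνint.const_mul (l + l ^ 2)).mono' (by fun_prop) ?_
  have : ∀ᵐ r ∂ν, 0 < r := by
    rw [ae_iff]; simp only [not_lt]; exact hν0
  filter_upwards [this] with r hr
  rw [norm_of_nonneg (exp_neg_sub_one_add_nonneg _)]
  exact exp_neg_mul_sub_one_add_mul_le hl hr.le

lemma convexOn (hβ : 0 ≤ β) (hν0 : ν (Iic 0) = 0)
    (hνint : Integrable (fun r => min r (r ^ 2)) ν) :
    ConvexOn ℝ (Ici 0) (branchingMechanism α β ν) := by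
  have hlin : ConvexOn ℝ (Ici 0) (fun l : ℝ => α * l) :=
    (LinearMap.mulLeft ℝ α).convexOn (convex_Ici 0)
  have hsq : ConvexOn ℝ (Ici 0) (fun l : ℝ => β * l ^ 2) := (convexOn_pow 2).smul hβ
  exact (hlin.add hsq).add (convexOn_integral (convex_Ici 0)
    (fun r => (convexOn_exp_neg_mul_sub_one_add_mul r).subset (subset_univ _) (convex_Ici 0))
    fun l hl => integrable_integrand hν0 hνint hl)

lemma nonneg (hα : 0 ≤ α) (hβ : 0 ≤ β) {l : ℝ} (hl : 0 ≤ l) : 0 ≤ branchingMechanism α β ν l :=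
  add_nonneg (by positivity) (integral_nonneg fun r => exp_neg_sub_one_add_nonneg _)

lemma map_zero : branchingMechanism α β ν 0 = 0 := by
  simp [branchingMechanism]

end branchingMechanism

namespace ConvexOn

variable {f : ℝ → ℝ}

lemma add_mul_sub_le_of_hasDerivAt {S : Set ℝ} {x y f' : ℝ} (hf : ConvexOn ℝ S f) (hx : x ∈ S)
    (hy : y ∈ S) (hd : HasDerivAt f f' x) : f x + f' * (y - x) ≤ f y := by
  rcases lt_trichotomy x y with hxy | rfl | hxy
  · have := hf.le_slope_of_hasDerivAt hx hy hxy hd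
    rw [slope_def_field, le_div_iff₀ (sub_pos.2 hxy)] at this
    linarith
  · simp
  · have := hf.slope_le_of_hasDerivAt hy hx hxy hd
    rw [slope_def_field, div_le_iff₀ (sub_pos.2 hxy)] at this
    linarith

variable (hf : ConvexOn ℝ (Ici 0) f) (h0 : f 0 = 0)
include hf h0

lemma map_mul_le_mul {t x : ℝ} (ht0 : 0 ≤ t) (ht1 : t ≤ 1) (hx : 0 ≤ x) :
    f (t * x) ≤ t * f x := by
  have := hf.2 (self_mem_Ici) (mem_Ici.2 hx) (sub_nonneg.2 ht1) ht0 (by ring)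
  simpa [h0] using this

lemma strictMonoOn_Ici (hpos : ∀ x, 0 < x → 0 < f x) : StrictMonoOn f (Ici 0) := by
  intro x hx y hy hxy
  have hy0 : 0 < y := lt_of_le_of_lt hx hxy
  have ht1 : x / y < 1 := (div_lt_one hy0).2 hxy
  calc f x = f (x / y * y) := by rw [div_mul_cancel₀ _ hy0.ne']
    _ ≤ x / y * f y := hf.map_mul_le_mul h0 (div_nonneg hx hy0.le) ht1.le hy0.le
    _ < f y := by nlinarith [hpos y hy0]

lemma continuousWithinAt_Ici_zero (hnn : ∀ x, 0 ≤ x → 0 ≤ f x) :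
    ContinuousWithinAt f (Ici 0) 0 := by
  have hupper : Tendsto (fun x => x * f 1) (𝓝[≥] 0) (𝓝 0) :=
    ((continuous_mul_const (f 1)).tendsto' 0 0 (zero_mul _)).mono_left nhdsWithin_le_nhds
  rw [ContinuousWithinAt, h0]
  refine tendsto_of_tendsto_of_tendsto_of_le_of_le' tendsto_const_nhds hupper ?_ ?_
  · filter_upwards [self_mem_nhdsWithin] with x hx using hnn x hx
  · filter_upwards [Icc_mem_nhdsGE (zero_lt_one' ℝ)] with x hx
    simpa using hf.map_mul_le_mul h0 hx.1 hx.2 zero_le_one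

lemma pos_of_hasDerivAt (hpos : ∀ x, 0 < x → 0 < f x) {x f' : ℝ} (hx : 0 < x)
    (hd : HasDerivAt f f' x) : 0 < f' := by
  have := hf.slope_le_of_hasDerivAt self_mem_Ici hx.le hx hd
  rw [slope_def_field, h0, sub_zero, sub_zero] at this
  exact (div_pos (hpos x hx) hx).trans_le this

end ConvexOn

lemma nonneg_of_hasDerivAt_pos_of_eq_zero {u u' : ℝ → ℝ}
    (hu : ∀ s, 0 ≤ s → HasDerivAt u (u' s) s) (h0 : 0 ≤ u 0)
    (hpos : ∀ s, 0 ≤ s → u s = 0 → 0 < u' s) {s : ℝ} (hs : 0 ≤ s) : 0 ≤ u s := by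
  have := image_le_of_deriv_right_lt_deriv_boundary (f := fun t => -u t) (f' := fun t => -u' t)
    (B := fun _ => 0) (B' := fun _ => 0) (a := 0) (b := s)
    (fun t ht => (hu t ht.1).continuousAt.neg.continuousWithinAt)
    (fun t ht => (hu t ht.1).neg.hasDerivWithinAt) (by simpa using h0)
    (fun _ => hasDerivAt_const _ _)
    (fun t ht ht0 => by simpa using hpos t ht.1 (neg_eq_zero.1 ht0)) ⟨hs, le_rfl⟩
  simpa using this

lemma lt_of_hasDerivAt_le_mul_sub {u u' : ℝ → ℝ} {c K : ℝ}
    (hu : ∀ s, 0 ≤ s → HasDerivAt u (u' s) s) (hbound : ∀ s, 0 ≤ s → u' s ≤ K * (c - u s))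
    (h0 : u 0 < c) {s : ℝ} (hs : 0 ≤ s) : u s < c := by
  have := le_gronwallBound_of_liminf_deriv_right_le (f := fun t => u t - c) (f' := u')
    (δ := u 0 - c) (K := -K) (ε := 0) (a := 0) (b := s)
    (fun t ht => ((hu t ht.1).continuousAt.sub continuousAt_const).continuousWithinAt)
    (fun t ht _ hr => ((hu t ht.1).sub_const c).hasDerivWithinAt.liminf_right_slope_le hr)
    le_rfl (fun t ht => by linarith [hbound t ht.1]) s ⟨hs, le_rfl⟩
  rw [gronwallBound_ε0] at this
  nlinarith [exp_pos (-K * (s - 0))]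

namespace BranchingODE

variable {ψ ψ' ψinv u : ℝ → ℝ} {l c : ℝ}
  (hconv : ConvexOn ℝ (Ici 0) ψ) (hψ0 : ψ 0 = 0) (hpos : ∀ x, 0 < x → 0 < ψ x)
  (hc : 0 < c) (hψc : ψ c = l)
  (hu0 : u 0 = 0) (hu : ∀ s, 0 ≤ s → HasDerivAt u (l - ψ (u s)) s)
include hconv hψ0 hpos hc hψc hu0 hu

lemma mem_Ico (hψ'c : HasDerivAt ψ (ψ' c) c) {s : ℝ} (hs : 0 ≤ s) : u s ∈ Ico 0 c := by
  have hl : 0 < l := hψc ▸ hpos c hc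
  have hnn : ∀ s, 0 ≤ s → 0 ≤ u s := fun s hs =>
    nonneg_of_hasDerivAt_pos_of_eq_zero hu hu0.ge (fun t _ ht => by rwa [ht, hψ0, sub_zero]) hs
  refine ⟨hnn s hs, lt_of_hasDerivAt_le_mul_sub (K := ψ' c) hu (fun t ht => ?_) (by rwa [hu0]) hs⟩
  -- `l - ψ x ≤ ψ' c * (c - x)`: the tangent line at `c` lies below `ψ`
  have := hconv.add_mul_sub_le_of_hasDerivAt hc.le (mem_Ici.2 (hnn t ht)) hψ'c
  rw [hψc] at this
  linarith

lemma pos (hψ'c : HasDerivAt ψ (ψ' c) c) {s : ℝ} (hs : 0 < s) : 0 < u s := by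
  have hsm := hconv.strictMonoOn_Ici hψ0 hpos
  have humono : StrictMonoOn u (Ici 0) := by
    refine strictMonoOn_of_hasDerivWithinAt_pos (convex_Ici 0)
      (fun t ht => (hu t ht).continuousAt.continuousWithinAt)
      (fun t ht => (hu t (interior_subset ht)).hasDerivWithinAt) fun t ht => ?_
    have hut := mem_Ico hconv hψ0 hpos hc hψc hu0 hu hψ'c (interior_subset ht)
    have := hsm hut.1 hc.le hut.2
    rw [hψc] at this
    linarith
  simpa [hu0] using humono self_mem_Ici hs.le hs

theorem integral_inv_deriv_comp_inv_eq (hderiv : ∀ x, 0 < x → HasDerivAt ψ (ψ' x) x)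
    (hinv : ∀ x, 0 ≤ x → ψinv (ψ x) = x) {r : ℝ} (hr : 0 < r) :
    ∫ x in (0 : ℝ)..(-log (1 - ψ (u r) / l)), 1 / ψ' (ψinv (l * (1 - exp (-x)))) = r := by
  have hl : 0 < l := hψc ▸ hpos c hc
  have hmem : ∀ s, 0 ≤ s → u s ∈ Ico 0 c := fun s hs =>
    mem_Ico hconv hψ0 hpos hc hψc hu0 hu (hderiv c hc) hs
  have hsm := hconv.strictMonoOn_Ici hψ0 hpos
  have hnn : ∀ x, 0 ≤ x → 0 ≤ ψ x := fun x hx => hψ0 ▸ hsm.monotoneOn self_mem_Ici hx hx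
  have hψlt : ∀ s, 0 ≤ s → ψ (u s) < l := fun s hs =>
    hψc ▸ hsm (hmem s hs).1 hc.le (hmem s hs).2
  have hψu : ∀ s, 0 ≤ s → 0 < 1 - ψ (u s) / l := fun s hs => by
    rw [sub_pos, div_lt_one hl]
    exact hψlt s hs
  set τ := fun s => -log (1 - ψ (u s) / l)
  have hτ0 : τ 0 = 0 := by simp [τ, hu0, hψ0]
  have hτr : 0 ≤ τ r := neg_nonneg.2 (log_nonpos (hψu r hr.le).le
    (by linarith [div_nonneg (hnn _ (hmem r hr.le).1) hl.le]))
  have hτcont : ContinuousOn τ (Icc 0 r) := by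
    have := (hconv.continuousOn_Ici (hconv.continuousWithinAt_Ici_zero hψ0 hnn)).comp
      (fun s (hs : s ∈ Icc 0 r) => (hu s hs.1).continuousAt.continuousWithinAt)
      (fun s hs => (hmem s hs.1).1)
    exact ((continuousOn_const.sub (this.div_const l)).log fun s hs => (hψu s hs.1).ne').neg
  have hτderiv : ∀ s ∈ Ioo 0 r, HasDerivAt τ (ψ' (u s)) s := by
    intro s hs
    have hv := (hderiv (u s) (pos hconv hψ0 hpos hc hψc hu0 hu (hderiv c hc) hs.1)).comp s
      (hu s hs.1.le)
    have h := (((hv.div_const l).const_sub 1).log (hψu s hs.1.le).ne').neg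
    rwa [Function.comp_apply, show -(-(ψ' (u s) * (l - ψ (u s)) / l) / (1 - ψ (u s) / l))
      = ψ' (u s) by field_simp [(sub_pos.2 (hψlt s hs.1.le)).ne']] at h
  have hinvτ : ∀ s, 0 ≤ s → ψinv (l * (1 - exp (-τ s))) = u s := by
    intro s hs
    simp only [τ, neg_neg, exp_log (hψu s hs)]
    rw [show l * (1 - (1 - ψ (u s) / l)) = ψ (u s) by field_simp; ring]
    exact hinv _ (hmem s hs).1
  have hψ'pos : ∀ s, 0 < s → 0 < ψ' (u s) := fun s hs =>
    have hus := pos hconv hψ0 hpos hc hψc hu0 hu (hderiv c hc) hs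
    hconv.pos_of_hasDerivAt hψ0 hpos hus (hderiv _ hus)
  calc ∫ x in (0 : ℝ)..τ r, 1 / ψ' (ψinv (l * (1 - exp (-x))))
      = ∫ x in Icc (τ 0) (τ r), 1 / ψ' (ψinv (l * (1 - exp (-x)))) := by
        rw [integral_of_le hτr, integral_Icc_eq_integral_Ioc, hτ0]
    _ = ∫ s in Icc 0 r, ψ' (u s) • (1 / ψ' (ψinv (l * (1 - exp (-τ s))))) :=
        (integral_Icc_deriv_smul_of_deriv_nonneg hτcont hτderiv
          (fun s hs => (hψ'pos s hs.1).le) hr.le).symm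
    _ = ∫ _ in Ioc 0 r, (1 : ℝ) := by
        rw [integral_Icc_eq_integral_Ioc]
        refine setIntegral_congr_fun measurableSet_Ioc fun s hs => ?_
        rw [hinvτ s hs.1.le, smul_eq_mul, mul_one_div_cancel (hψ'pos s hs.1).ne']
    _ = r := by simp [hr.le]

end BranchingODE

theorem L_integral_identity_general (α β : ℝ) (hα : 0 ≤ α) (hβ : 0 ≤ β)
    (ν : Measure ℝ) (hν0 : ν (Set.Iic 0) = 0)
    (hνint : Integrable (fun r => min r (r ^ 2)) ν)
    (ψ ψ' ψinv : ℝ → ℝ) (κ : ℝ → ℝ → ℝ)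
    (hψ : ∀ l : ℝ, 0 ≤ l →
      ψ l = α * l + β * l ^ 2 + ∫ r, (Real.exp (-(l * r)) - 1 + l * r) ∂ν)
    (hderiv : ∀ l : ℝ, 0 < l → HasDerivAt ψ (ψ' l) l)
    (hinvpos : ∀ l : ℝ, 0 < l → 0 < ψinv l)
    (hinv₁ : ∀ l : ℝ, 0 ≤ l → ψ (ψinv l) = l)
    (hinv₂ : ∀ l : ℝ, 0 ≤ l → ψinv (ψ l) = l)
    -- κ_·(λ,0) solves the ODE ∂κ_r/∂r = λ - ψ(κ_r), κ₀ = 0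
    (hκ0 : ∀ l : ℝ, 0 < l → κ 0 l = 0)
    (hκ : ∀ l : ℝ, 0 < l → ∀ r : ℝ, 0 ≤ r →
      HasDerivAt (fun s => κ s l) (l - ψ (κ r l)) r) :
    ∀ r l : ℝ, 0 < r → 0 < l →
      (∫ x in (0:ℝ)..(-Real.log (1 - ψ (κ r l) / l)),
        1 / ψ' (ψinv (l * (1 - Real.exp (-x))))) = r := by
  intro r l hr hl
  have hψ_eq : EqOn ψ (branchingMechanism α β ν) (Ici 0) := hψ
  have hψ0 : ψ 0 = 0 := (hψ_eq self_mem_Ici).trans branchingMechanism.map_zero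
  have hpos : ∀ x, 0 < x → 0 < ψ x := fun x hx =>
    ((hψ_eq hx.le).symm ▸ branchingMechanism.nonneg hα hβ hx.le).lt_of_ne fun h =>
      hx.ne <| calc 0 = ψinv (ψ 0) := (hinv₂ 0 le_rfl).symm
        _ = ψinv (ψ x) := by rw [hψ0, h]
        _ = x := hinv₂ x hx.le
  exact BranchingODE.integral_inv_deriv_comp_inv_eq
    ((branchingMechanism.convexOn hβ hν0 hνint).congr hψ_eq.symm) hψ0 hpos (hinvpos l hl)
    (hinv₁ l hl.le) (hκ0 l hl) (hκ l hl) hderiv hinv₂ hr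

/-- With κ_r(λ,0) solving ∂κ/∂r = λ - ψ(κ), κ₀ = 0, and
L_r(λ) = 1 - ψ(κ_r(λ,0))/λ, one has ∫₀^{-log L_r(λ)} dx/φ(λ(1-e^{-x})) = r,
where φ = ψ' ∘ ψ⁻¹. -/
theorem L_integral_identity (α β : ℝ) (hα : 0 ≤ α) (hβ : 0 ≤ β)
    (ν : Measure ℝ) (hν0 : ν (Set.Iic 0) = 0)
    (hνint : Integrable (fun r => min r (r ^ 2)) ν)
    (ψ ψ' ψinv : ℝ → ℝ) (κ : ℝ → ℝ → ℝ)
    (hψ : ∀ l : ℝ, 0 ≤ l →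
      ψ l = α * l + β * l ^ 2 + ∫ r, (Real.exp (-(l * r)) - 1 + l * r) ∂ν)
    (hext : IntegrableOn (fun u => 1 / ψ u) (Set.Ioi 1))
    (hderiv : ∀ l : ℝ, 0 < l → HasDerivAt ψ (ψ' l) l)
    (hinvpos : ∀ l : ℝ, 0 < l → 0 < ψinv l)
    (hinv₁ : ∀ l : ℝ, 0 ≤ l → ψ (ψinv l) = l)
    (hinv₂ : ∀ l : ℝ, 0 ≤ l → ψinv (ψ l) = l)
    -- κ_·(λ,0) solves the ODE ∂κ_r/∂r = λ - ψ(κ_r), κ₀ = 0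
    (hκ0 : ∀ l : ℝ, 0 < l → κ 0 l = 0)
    (hκ : ∀ l : ℝ, 0 < l → ∀ r : ℝ, 0 ≤ r →
      HasDerivAt (fun s => κ s l) (l - ψ (κ r l)) r) :
    ∀ r l : ℝ, 0 < r → 0 < l →
      (∫ x in (0:ℝ)..(-Real.log (1 - ψ (κ r l) / l)),
        1 / ψ' (ψinv (l * (1 - Real.exp (-x))))) = r :=
  L_integral_identity_general α β hα hβ ν hν0 hνint ψ ψ' ψinv κ hψ hderiv hinvpos hinv₁ hinv₂ hκ0 hκ
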